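/- Let (M, 𝓛) be a finite linear space in which every line is either affine or projective. If there exist two distinct affine lines that intersect each other, then no line of 𝓛 is projective, i.e., every line is affine. -/

import Mathlib

/-- A linear space: a point set `M` together with a collection of lines (subsets of `M`)
such that every line has at least 3 points, any two distinct points lie on exactly one
common line, and every point lies on at least 3 lines. -/
structure LinearSpace (M : Type*) where
  lines : Set (Set M)
  exists_three_points : ∀ L ∈ lines, ∃ a b c : M,
    a ∈ L ∧ b ∈ L ∧ c ∈ L ∧ a ≠ b ∧ a ≠ c ∧ b ≠ c
  join_unique : ∀ p q : M, p ≠ q → ∃! L, L ∈ lines ∧ p ∈ L ∧ q ∈ L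
  exists_three_lines : ∀ p : M, ∃ L₁ L₂ L₃, L₁ ∈ lines ∧ L₂ ∈ lines ∧ L₃ ∈ lines ∧
    p ∈ L₁ ∧ p ∈ L₂ ∧ p ∈ L₃ ∧ L₁ ≠ L₂ ∧ L₁ ≠ L₃ ∧ L₂ ≠ L₃

namespace LinearSpace

variable {M : Type*}

/-- Two lines are parallel if they are equal or disjoint. -/
def Parallel (L K : Set M) : Prop := L = K ∨ L ∩ K = ∅

/-- A line `L` is affine if for every point `p ∉ L` there is exactly one line
through `p` disjoint from `L`. -/
def IsAffine (S : LinearSpace M) (L : Set M) : Prop :=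
  L ∈ S.lines ∧ ∀ p ∉ L, ∃! K, K ∈ S.lines ∧ p ∈ K ∧ K ∩ L = ∅

/-- A line is projective if it meets every other line. -/
def IsProjective (S : LinearSpace M) (L : Set M) : Prop :=
  L ∈ S.lines ∧ ∀ K ∈ S.lines, K ≠ L → (L ∩ K).Nonempty

/-- An affine line is biaffine if every line parallel to it is also affine. -/
def IsBiaffine (S : LinearSpace M) (L : Set M) : Prop :=
  S.IsAffine L ∧ ∀ K ∈ S.lines, Parallel K L → S.IsAffine K

end LinearSpace

open LinearSpace

/-!
Through a point off a line `L` pass `|L| + 1` lines if `L` is affine and `|L|` if `L` is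
projective. Comparing at a point off two lines shows that all affine lines have the same size
`n`, projective lines have `n + 1` points, and every point lies on `n + 1` lines. Summing over the
lines through a point `x` gives `|M| = n² + kₓ`, where `kₓ` is the number of projective lines
through `x`; and the lines disjoint from an affine line partition its complement into affine
lines, so `n ∣ |M|`. At the common point of the two affine lines `kₓ ≤ n - 1`, hence `kₓ = 0`
and `|M| = n²`, whereas at a point of a projective line the same count gives `|M| > n²`.
-/

theorem finsum_mem_eq_ncard_mul {ι : Type*} {t : Set ι} {f : ι → ℕ} {c : ℕ}
    (h : ∀ i ∈ t, f i = c) : ∑ᶠ i ∈ t, f i = t.ncard * c := by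
  rw [finsum_mem_congr rfl h, ← finsum_one, finsum_mem_mul]
  simp only [one_mul]

namespace LinearSpace

variable {M : Type*} (S : LinearSpace M)

theorem eq_of_mem_of_mem {L K : Set M} (hL : L ∈ S.lines) (hK : K ∈ S.lines) {p q : M}
    (hpq : p ≠ q) (hpL : p ∈ L) (hqL : q ∈ L) (hpK : p ∈ K) (hqK : q ∈ K) : L = K :=
  (S.join_unique p q hpq).unique ⟨hL, hpL, hqL⟩ ⟨hK, hpK, hqK⟩

theorem inter_subsingleton {L K : Set M} (hL : L ∈ S.lines) (hK : K ∈ S.lines) (hLK : L ≠ K) :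
    (L ∩ K).Subsingleton := fun _ hp _ hq ↦
  by_contra fun hpq ↦ hLK (S.eq_of_mem_of_mem hL hK hpq hp.1 hq.1 hp.2 hq.2)

theorem three_le_encard {L : Set M} (hL : L ∈ S.lines) : 3 ≤ L.encard := by
  obtain ⟨a, b, c, ha, hb, hc, hab, hac, hbc⟩ := S.exists_three_points L hL
  calc (3 : ℕ∞) = ({a, b, c} : Set M).encard :=
        (Set.encard_eq_three.mpr ⟨a, b, c, hab, hac, hbc, rfl⟩).symm
    _ ≤ L.encard := Set.encard_le_encard (by simp [Set.insert_subset_iff, ha, hb, hc])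

/-- The line through two distinct points; an arbitrary set when `p = q`. -/
noncomputable def join (p q : M) : Set M :=
  Classical.epsilon fun L ↦ L ∈ S.lines ∧ p ∈ L ∧ q ∈ L

theorem join_spec {p q : M} (hpq : p ≠ q) :
    S.join p q ∈ S.lines ∧ p ∈ S.join p q ∧ q ∈ S.join p q :=
  Classical.epsilon_spec (S.join_unique p q hpq).exists

theorem eq_join {p q : M} (hpq : p ≠ q) {L : Set M} (hL : L ∈ S.lines) (hp : p ∈ L) (hq : q ∈ L) :
    L = S.join p q :=
  have h := S.join_spec hpq
  S.eq_of_mem_of_mem hL h.1 hpq hp hq h.2.1 h.2.2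

def linesThrough (p : M) : Set (Set M) := {L | L ∈ S.lines ∧ p ∈ L}

theorem exists_line_through_ne (p : M) (L K : Set M) :
    ∃ N ∈ S.lines, p ∈ N ∧ N ≠ L ∧ N ≠ K := by
  obtain ⟨L₁, L₂, L₃, h₁, h₂, h₃, m₁, m₂, m₃, d₁₂, d₁₃, d₂₃⟩ := S.exists_three_lines p
  by_contra! h
  have hsub : ({L₁, L₂, L₃} : Set (Set M)) ⊆ {L, K} := by
    simp only [Set.insert_subset_iff, Set.singleton_subset_iff, Set.mem_insert_iff,
      Set.mem_singleton_iff]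
    exact ⟨(em _).imp_right (h _ h₁ m₁), (em _).imp_right (h _ h₂ m₂),
      (em _).imp_right (h _ h₃ m₃)⟩
  have := calc (3 : ℕ∞) = ({L₁, L₂, L₃} : Set (Set M)).encard :=
        (Set.encard_eq_three.mpr ⟨L₁, L₂, L₃, d₁₂, d₁₃, d₂₃, rfl⟩).symm
    _ ≤ ({L, K} : Set (Set M)).encard := Set.encard_le_encard hsub
    _ ≤ 2 := (Set.encard_insert_le _ _).trans (by rw [Set.encard_singleton]; rfl)
  norm_num at this

theorem exists_notMem_and_notMem {L K : Set M} (hL : L ∈ S.lines) (hK : K ∈ S.lines) :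
    ∃ p, p ∉ L ∧ p ∉ K := by
  obtain ⟨a, -, -, ha, -⟩ := S.exists_three_points L hL
  obtain ⟨N, hN, -, hNL, hNK⟩ := S.exists_line_through_ne a L K
  by_contra! h
  have hcover : N ⊆ (N ∩ L) ∪ (N ∩ K) := fun p hp ↦
    (em (p ∈ L)).imp (fun hpL ↦ ⟨hp, hpL⟩) (fun hpL ↦ ⟨hp, h p hpL⟩)
  have := calc 3 ≤ N.encard := S.three_le_encard hN
    _ ≤ ((N ∩ L) ∪ (N ∩ K)).encard := Set.encard_le_encard hcover
    _ ≤ (N ∩ L).encard + (N ∩ K).encard := Set.encard_union_le _ _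
    _ ≤ 1 + 1 := add_le_add
        (Set.encard_le_one_iff_subsingleton.mpr (S.inter_subsingleton hN hL hNL))
        (Set.encard_le_one_iff_subsingleton.mpr (S.inter_subsingleton hN hK hNK))
  norm_num at this

theorem exists_line_notMem (p : M) : ∃ N ∈ S.lines, p ∉ N := by
  obtain ⟨L, -, -, hL, -, -, hpL, -⟩ := S.exists_three_lines p
  obtain ⟨a, b, -, ha, hb, -, hab, -⟩ := S.exists_three_points L hL
  obtain ⟨q, hqL, hqp⟩ : ∃ q ∈ L, q ≠ p := by
    by_cases hap : a = p
    · exact ⟨b, hb, hap ▸ hab.symm⟩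
    · exact ⟨a, ha, hap⟩
  obtain ⟨N, hN, hqN, hNL, -⟩ := S.exists_line_through_ne q L L
  exact ⟨N, hN, fun hpN ↦ hqp (S.inter_subsingleton hN hL hNL ⟨hqN, hqL⟩ ⟨hpN, hpL⟩)⟩

theorem ncard_linesThrough_meeting {L : Set M} (hL : L ∈ S.lines) {p : M} (hp : p ∉ L) :
    {K ∈ S.linesThrough p | (K ∩ L).Nonempty}.ncard = L.ncard := by
  have hne : ∀ q ∈ L, p ≠ q := fun q hq hpq ↦ hp (hpq ▸ hq)
  have himage : {K ∈ S.linesThrough p | (K ∩ L).Nonempty} = S.join p '' L := by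
    ext K
    constructor
    · rintro ⟨⟨hK, hpK⟩, q, hqK, hqL⟩
      exact ⟨q, hqL, (S.eq_join (hne q hqL) hK hpK hqK).symm⟩
    · rintro ⟨q, hqL, rfl⟩
      obtain ⟨hJ, hpJ, hqJ⟩ := S.join_spec (hne q hqL)
      exact ⟨⟨hJ, hpJ⟩, q, hqJ, hqL⟩
  rw [himage]
  refine Set.InjOn.ncard_image fun q₁ hq₁ q₂ hq₂ hjoin ↦ ?_
  -- a line through `p` meeting `L` twice would be `L` itself
  by_contra hq
  obtain ⟨hJ, hpJ, hq₁J⟩ := S.join_spec (hne q₁ hq₁)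
  have hq₂J : q₂ ∈ S.join p q₁ := hjoin ▸ (S.join_spec (hne q₂ hq₂)).2.2
  exact hp (S.eq_of_mem_of_mem hJ hL hq hq₁J hq₂J hq₁ hq₂ ▸ hpJ)

theorem ncard_linesThrough [Finite M] {L : Set M} (hL : L ∈ S.lines) {p : M} (hp : p ∉ L) :
    (S.linesThrough p).ncard = L.ncard + {K ∈ S.linesThrough p | K ∩ L = ∅}.ncard := by
  have hsplit : S.linesThrough p =
      {K ∈ S.linesThrough p | (K ∩ L).Nonempty} ∪ {K ∈ S.linesThrough p | K ∩ L = ∅} := by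
    ext K
    simp only [Set.mem_union, Set.mem_sep_iff, ← and_or_left,
      ← Set.not_nonempty_iff_eq_empty, em, and_true]
  have hdisj : Disjoint {K ∈ S.linesThrough p | (K ∩ L).Nonempty}
      {K ∈ S.linesThrough p | K ∩ L = ∅} :=
    Set.disjoint_left.mpr fun K h₁ h₂ ↦ h₁.2.ne_empty h₂.2
  rw [← S.ncard_linesThrough_meeting hL hp, ← Set.ncard_union_eq hdisj, ← hsplit]

theorem ncard_compl_singleton_eq_finsum [Finite M] (x : M) :
    ({x}ᶜ : Set M).ncard = ∑ᶠ L ∈ S.linesThrough x, (L \ {x}).ncard := by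
  have hunion : ⋃ L ∈ S.linesThrough x, L \ {x} = {x}ᶜ := by
    ext y
    simp only [Set.mem_iUnion₂, Set.mem_sdiff, Set.mem_singleton_iff, exists_prop,
      Set.mem_compl_iff]
    refine ⟨fun ⟨_, _, _, hyx⟩ ↦ hyx, fun hyx ↦ ?_⟩
    obtain ⟨L, hL, hxL, hyL⟩ := (S.join_unique x y (Ne.symm hyx)).exists
    exact ⟨L, ⟨hL, hxL⟩, hyL, hyx⟩
  have hdisj : (S.linesThrough x).PairwiseDisjoint (· \ {x}) := fun L hL K hK hLK ↦
    Set.disjoint_left.mpr fun y hyL hyK ↦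
      hyL.2 (S.inter_subsingleton hL.1 hK.1 hLK ⟨hyL.1, hyK.1⟩ ⟨hL.2, hK.2⟩)
  rw [← hunion, (Set.toFinite _).ncard_biUnion (fun _ _ ↦ Set.toFinite _) hdisj]

variable {S}

theorem IsAffine.ncard_linesThrough [Finite M] {L : Set M} (hL : S.IsAffine L) {p : M}
    (hp : p ∉ L) : (S.linesThrough p).ncard = L.ncard + 1 := by
  rw [S.ncard_linesThrough hL.1 hp, Nat.add_left_cancel_iff, Set.ncard_eq_one]
  obtain ⟨K, hK, hKu⟩ := hL.2 p hp
  exact ⟨K, Set.eq_singleton_iff_unique_mem.mpr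
    ⟨and_assoc.mpr hK, fun K' hK' ↦ hKu K' (and_assoc.mp hK')⟩⟩

theorem IsProjective.ncard_linesThrough [Finite M] {L : Set M} (hL : S.IsProjective L) {p : M}
    (hp : p ∉ L) : (S.linesThrough p).ncard = L.ncard := by
  have hnone : {K ∈ S.linesThrough p | K ∩ L = ∅} = ∅ :=
    Set.eq_empty_of_forall_notMem fun K ⟨⟨hK, hpK⟩, hKL⟩ ↦
      have ⟨q, hqL, hqK⟩ := hL.2 K hK (ne_of_mem_of_not_mem' hpK hp)
      hKL.subset ⟨hqK, hqL⟩
  rw [S.ncard_linesThrough hL.1 hp, hnone, Set.ncard_empty, add_zero]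

theorem IsAffine.not_isProjective {L : Set M} (hL : S.IsAffine L) : ¬ S.IsProjective L := by
  intro hP
  obtain ⟨p, hp, -⟩ := S.exists_notMem_and_notMem hL.1 hL.1
  obtain ⟨K, ⟨hK, hpK, hKL⟩, -⟩ := hL.2 p hp
  obtain ⟨q, hqL, hqK⟩ := hP.2 K hK (ne_of_mem_of_not_mem' hpK hp)
  exact hKL.subset ⟨hqK, hqL⟩

theorem IsAffine.ncard_compl_eq_finsum [Finite M] {A : Set M} (hA : S.IsAffine A) :
    Aᶜ.ncard = ∑ᶠ K ∈ {K ∈ S.lines | K ∩ A = ∅}, K.ncard := by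
  have hunion : ⋃ K ∈ {K ∈ S.lines | K ∩ A = ∅}, K = Aᶜ := by
    ext y
    simp only [Set.mem_iUnion₂, Set.mem_sep_iff, exists_prop, Set.mem_compl_iff]
    refine ⟨fun ⟨K, ⟨_, hKA⟩, hyK⟩ hyA ↦ hKA.subset ⟨hyK, hyA⟩, fun hyA ↦ ?_⟩
    obtain ⟨K, ⟨hK, hyK, hKA⟩, -⟩ := hA.2 y hyA
    exact ⟨K, ⟨hK, hKA⟩, hyK⟩
  have hdisj : {K ∈ S.lines | K ∩ A = ∅}.PairwiseDisjoint id := by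
    intro K ⟨hK, hKA⟩ K' ⟨hK', hK'A⟩ hKK'
    refine Set.disjoint_left.mpr fun y hyK hyK' ↦ hKK' ?_
    have hyA : y ∉ A := fun hyA ↦ hKA.subset ⟨hyK, hyA⟩
    exact (hA.2 y hyA).unique ⟨hK, hyK, hKA⟩ ⟨hK', hyK', hK'A⟩
  rw [← hunion]
  exact (Set.toFinite _).ncard_biUnion (fun _ _ ↦ Set.toFinite _) hdisj

section AffineOrProjective

variable [Finite M]

theorem IsAffine.ncard_eq {L K : Set M} (hL : S.IsAffine L) (hK : S.IsAffine K) :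
    L.ncard = K.ncard := by
  obtain ⟨p, hpL, hpK⟩ := S.exists_notMem_and_notMem hL.1 hK.1
  exact Nat.add_right_cancel
    ((hL.ncard_linesThrough hpL).symm.trans (hK.ncard_linesThrough hpK))

theorem IsProjective.ncard_eq_add_one {P A : Set M} (hP : S.IsProjective P)
    (hA : S.IsAffine A) : P.ncard = A.ncard + 1 := by
  obtain ⟨p, hpP, hpA⟩ := S.exists_notMem_and_notMem hP.1 hA.1
  exact (hP.ncard_linesThrough hpP).symm.trans (hA.ncard_linesThrough hpA)

theorem ncard_linesThrough_eq_add_one (hdich : ∀ L ∈ S.lines, S.IsAffine L ∨ S.IsProjective L)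
    {A : Set M} (hA : S.IsAffine A) (p : M) : (S.linesThrough p).ncard = A.ncard + 1 := by
  obtain ⟨N, hN, hpN⟩ := S.exists_line_notMem p
  rcases hdich N hN with hN | hN
  · rw [hN.ncard_linesThrough hpN, hN.ncard_eq hA]
  · rw [hN.ncard_linesThrough hpN, hN.ncard_eq_add_one hA]

theorem card_eq_sq_add_ncard_projective
    (hdich : ∀ L ∈ S.lines, S.IsAffine L ∨ S.IsProjective L) {A : Set M} (hA : S.IsAffine A)
    (x : M) : Nat.card M = A.ncard ^ 2 + {L ∈ S.linesThrough x | S.IsProjective L}.ncard := by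
  set n := A.ncard
  set Pr := {L ∈ S.linesThrough x | S.IsProjective L}
  set Af := {L ∈ S.linesThrough x | ¬ S.IsProjective L}
  have hsplit : S.linesThrough x = Pr ∪ Af := by
    rw [← Set.sep_or]; simp only [em, Set.sep_true]
  have hdisj : Disjoint Pr Af := Set.disjoint_left.mpr fun _ h₁ h₂ ↦ h₂.2 h₁.2
  have hlines : Pr.ncard + Af.ncard = n + 1 := by
    rw [← Set.ncard_union_eq hdisj, ← hsplit, S.ncard_linesThrough_eq_add_one hdich hA]
  have hPr : ∀ L ∈ Pr, (L \ {x}).ncard = n := fun L ⟨⟨_, hxL⟩, hL⟩ ↦ by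
    rw [Set.ncard_sdiff_singleton_of_mem hxL, hL.ncard_eq_add_one hA, Nat.add_sub_cancel]
  have hAf : ∀ L ∈ Af, (L \ {x}).ncard = n - 1 := fun L ⟨⟨hL, hxL⟩, hLP⟩ ↦ by
    rw [Set.ncard_sdiff_singleton_of_mem hxL, ((hdich L hL).resolve_right hLP).ncard_eq hA]
  have hpoints : Nat.card M = 1 + (Pr.ncard * n + Af.ncard * (n - 1)) := by
    rw [← Set.ncard_add_ncard_compl {x}, Set.ncard_singleton, S.ncard_compl_singleton_eq_finsum,
      hsplit, finsum_mem_union hdisj (Set.toFinite _) (Set.toFinite _),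
      finsum_mem_eq_ncard_mul hPr, finsum_mem_eq_ncard_mul hAf]
  have hn : 1 ≤ n := by
    obtain ⟨a, -, -, ha, -⟩ := S.exists_three_points A hA.1
    exact (Set.ncard_pos (Set.toFinite A)).mpr ⟨a, ha⟩
  zify [hn] at hlines hpoints ⊢
  linear_combination hpoints + ((n : ℤ) - 1) * hlines

theorem IsAffine.ncard_dvd_card (hdich : ∀ L ∈ S.lines, S.IsAffine L ∨ S.IsProjective L)
    {A : Set M} (hA : S.IsAffine A) : A.ncard ∣ Nat.card M := by
  have hpar : ∀ K ∈ {K ∈ S.lines | K ∩ A = ∅}, K.ncard = A.ncard := by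
    rintro K ⟨hK, hKA⟩
    refine ((hdich K hK).resolve_right fun hKP ↦ ?_).ncard_eq hA
    -- a projective line would meet `A`, which is not disjoint from itself
    obtain ⟨a, -, -, ha, -⟩ := S.exists_three_points A hA.1
    obtain ⟨q, hqK, hqA⟩ := hKP.2 A hA.1 fun hAK ↦ hKA.subset ⟨hAK ▸ ha, ha⟩
    exact hKA.subset ⟨hqK, hqA⟩
  refine ⟨{K ∈ S.lines | K ∩ A = ∅}.ncard + 1, ?_⟩
  rw [← Set.ncard_add_ncard_compl A, hA.ncard_compl_eq_finsum, finsum_mem_eq_ncard_mul hpar]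
  ring

theorem ncard_projective_linesThrough_eq_zero
    (hdich : ∀ L ∈ S.lines, S.IsAffine L ∨ S.IsProjective L) {A B : Set M}
    (hA : S.IsAffine A) (hB : S.IsAffine B) (hAB : A ≠ B) {x : M} (hxA : x ∈ A) (hxB : x ∈ B) :
    {L ∈ S.linesThrough x | S.IsProjective L}.ncard = 0 := by
  set k := {L ∈ S.linesThrough x | S.IsProjective L}.ncard
  have hk : k + 2 ≤ A.ncard + 1 := by
    have hdisj : Disjoint {L ∈ S.linesThrough x | S.IsProjective L} {A, B} := by
      simp only [Set.disjoint_insert_right, Set.disjoint_singleton_right, Set.mem_sep_iff,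
        hA.not_isProjective, hB.not_isProjective, and_false, not_false_eq_true, and_self]
    have hsub : {L ∈ S.linesThrough x | S.IsProjective L} ∪ {A, B} ⊆ S.linesThrough x :=
      Set.union_subset (Set.sep_subset _ _)
        (Set.pair_subset ⟨hA.1, hxA⟩ ⟨hB.1, hxB⟩)
    rw [← Set.ncard_pair hAB, ← Set.ncard_union_eq hdisj,
      ← S.ncard_linesThrough_eq_add_one hdich hA x]
    exact Set.ncard_le_ncard hsub
  -- `n ∣ |M| = n² + k` and `k < n`
  have hdvd : A.ncard ∣ k := by
    have := hA.ncard_dvd_card hdich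
    rwa [S.card_eq_sq_add_ncard_projective hdich hA x,
      Nat.dvd_add_right (dvd_pow_self _ two_ne_zero)] at this
  exact Nat.eq_zero_of_dvd_of_lt hdvd (by omega)

end AffineOrProjective

end LinearSpace

/-- In a finite linear space in which every line is affine or projective, if two
distinct affine lines intersect, then no line is projective, i.e. every line is
affine. -/
theorem all_affine_of_intersecting_affine_lines {M : Type*} [Finite M]
    (S : LinearSpace M)
    (hdich : ∀ L ∈ S.lines, S.IsAffine L ∨ S.IsProjective L)
    (A B : Set M) (hA : S.IsAffine A) (hB : S.IsAffine B) (hAB : A ≠ B)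
    (hmeet : (A ∩ B).Nonempty) :
    (∀ L ∈ S.lines, ¬ S.IsProjective L) ∧ (∀ L ∈ S.lines, S.IsAffine L) := by
  have hnotProj : ∀ L ∈ S.lines, ¬ S.IsProjective L := by
    intro P _ hP
    obtain ⟨x, hxA, hxB⟩ := hmeet
    obtain ⟨y, -, -, hyP, -⟩ := S.exists_three_points P hP.1
    have hx := S.card_eq_sq_add_ncard_projective hdich hA x
    have hy := S.card_eq_sq_add_ncard_projective hdich hA y
    rw [S.ncard_projective_linesThrough_eq_zero hdich hA hB hAB hxA hxB] at hx
    have hPy : 0 < {L ∈ S.linesThrough y | S.IsProjective L}.ncard :=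
      (Set.ncard_pos (Set.toFinite _)).mpr ⟨P, ⟨hP.1, hyP⟩, hP⟩
    omega
  exact ⟨hnotProj, fun L hL ↦ (hdich L hL).resolve_right (hnotProj L hL)⟩
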